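/- Let X1,...,Xn (n ≥ 2) be discrete random variables with finite ranges. The variables are mutually statistically independent if and only if for every subset I ⊆ {1,...,n} with |I| ≥ 2, the multivariate mutual information I_{|I|}((X_i)_{i∈I}) equals zero. In particular the vanishing of these 2^n - n - 1 quantities is equivalent to independence. -/

import Mathlib

open Finset

noncomputable def negMulLog2 (x : ℝ) : ℝ := -(x * Real.logb 2 x)

noncomputable def prob {Ω α : Type*} [Fintype Ω] [DecidableEq α]
    (p : Ω → ℝ) (X : Ω → α) (x : α) : ℝ :=
  ∑ ω : Ω, if X ω = x then p ω else 0

noncomputable def ent {Ω α : Type*} [Fintype Ω] [Fintype α] [DecidableEq α]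
    (p : Ω → ℝ) (X : Ω → α) : ℝ :=
  ∑ x : α, negMulLog2 (prob p X x)

noncomputable def condp {Ω γ : Type*} [Fintype Ω] [DecidableEq γ]
    (p : Ω → ℝ) (Z : Ω → γ) (z : γ) : Ω → ℝ :=
  fun ω => if Z ω = z then p ω / prob p Z z else 0

noncomputable def I2 {Ω α β : Type*} [Fintype Ω] [Fintype α] [DecidableEq α]
    [Fintype β] [DecidableEq β]
    (p : Ω → ℝ) (X : Ω → α) (Y : Ω → β) : ℝ :=
  ent p X + ent p Y - ent p (fun ω => (X ω, Y ω))

noncomputable def condI2 {Ω α β γ : Type*} [Fintype Ω] [Fintype α] [DecidableEq α]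
    [Fintype β] [DecidableEq β] [Fintype γ] [DecidableEq γ]
    (p : Ω → ℝ) (X : Ω → α) (Y : Ω → β) (Z : Ω → γ) : ℝ :=
  ∑ z : γ, prob p Z z * I2 (condp p Z z) X Y

noncomputable def I3 {Ω α β γ : Type*} [Fintype Ω] [Fintype α] [DecidableEq α]
    [Fintype β] [DecidableEq β] [Fintype γ] [DecidableEq γ]
    (p : Ω → ℝ) (X : Ω → α) (Y : Ω → β) (Z : Ω → γ) : ℝ :=
  ent p X + ent p Y + ent p Z
    - ent p (fun ω => (X ω, Y ω)) - ent p (fun ω => (X ω, Z ω))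
    - ent p (fun ω => (Y ω, Z ω))
    + ent p (fun ω => (X ω, Y ω, Z ω))

noncomputable def jointEnt {Ω ι : Type*} [Fintype Ω] [Fintype ι] [DecidableEq ι]
    {α : ι → Type*} [∀ i, Fintype (α i)] [∀ i, DecidableEq (α i)]
    (p : Ω → ℝ) (X : ∀ i, Ω → α i) (J : Finset ι) : ℝ :=
  ent p (fun ω => (fun i : J => X i.1 ω))

noncomputable def Imulti {Ω ι : Type*} [Fintype Ω] [Fintype ι] [DecidableEq ι]
    {α : ι → Type*} [∀ i, Fintype (α i)] [∀ i, DecidableEq (α i)]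
    (p : Ω → ℝ) (X : ∀ i, Ω → α i) (S : Finset ι) : ℝ :=
  ∑ J ∈ S.powerset, if J = ∅ then 0 else (-1 : ℝ) ^ (J.card + 1) * jointEnt p X J

/-
For a finite family, `∑ i, H(X i) - H(X)` is the Kullback–Leibler divergence of the
joint law from the product of the marginals, so by Gibbs' inequality entropy is additive exactly
when the family is independent. Independence passes to subfamilies, so it makes `J ↦ H(X_J)`
additive, and the alternating sum of an additive set function over a set of size `≥ 2` vanishes.
Conversely, the alternating sum over `S` determines `H(X_S)` from its values on proper subsets, so
the vanishing of every `I_|S|` together with the trivial cases `|S| ≤ 1` forces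
`H(X_J) = ∑ i ∈ J, H(X i)` by induction; for the full index set this is independence.
-/

open Real InformationTheory

section Law

variable {Ω α β : Type*} [Fintype Ω] [DecidableEq α] {p : Ω → ℝ}

lemma prob_nonneg (hp : ∀ ω, 0 ≤ p ω) (X : Ω → α) (x : α) : 0 ≤ prob p X x :=
  sum_nonneg fun ω _ => by split_ifs <;> simp [hp ω]

lemma prob_congr [DecidableEq β] {X : Ω → α} {Y : Ω → β} {x : α} {y : β}
    (h : ∀ ω, X ω = x ↔ Y ω = y) : prob p X x = prob p Y y :=
  sum_congr rfl fun ω _ => if_congr (h ω) rfl rfl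

lemma prob_le_prob_comp [DecidableEq β] (hp : ∀ ω, 0 ≤ p ω) (X : Ω → α) (g : α → β) (x : α) :
    prob p X x ≤ prob p (fun ω => g (X ω)) (g x) :=
  sum_le_sum fun ω _ => by split_ifs with h₁ h₂ <;> simp_all

lemma sum_prob_mul [Fintype α] (X : Ω → α) (φ : α → ℝ) :
    ∑ x, prob p X x * φ x = ∑ ω, p ω * φ (X ω) := by
  simp only [prob, sum_mul, ite_mul, zero_mul]
  rw [sum_comm]
  simp

lemma sum_prob [Fintype α] (hs : ∑ ω, p ω = 1) (X : Ω → α) : ∑ x, prob p X x = 1 := by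
  simpa [hs] using sum_prob_mul (p := p) X fun _ => 1

lemma prob_comp [Fintype α] [DecidableEq β] (X : Ω → α) (g : α → β) (y : β) :
    prob p (fun ω => g (X ω)) y = ∑ x, prob p X x * if g x = y then 1 else 0 := by
  rw [sum_prob_mul]
  simp only [prob, mul_ite, mul_one, mul_zero]

lemma ent_eq_neg_sum_mul_log [Fintype α] (X : Ω → α) :
    ent p X = -(∑ x, prob p X x * log (prob p X x)) / log 2 := by
  simp [ent, negMulLog2, logb, sum_div, mul_div_assoc, neg_div]

end Law

lemma eq_of_sum_mul_log_eq {κ : Type*} [Fintype κ] {P Q : κ → ℝ} (hP : ∀ i, 0 ≤ P i)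
    (hQ : ∀ i, 0 ≤ Q i) (hPQ : ∑ i, P i = ∑ i, Q i) (hac : ∀ i, Q i = 0 → P i = 0)
    (h : ∑ i, P i * log (Q i) = ∑ i, P i * log (P i)) : P = Q := by
  have hterm : ∀ i,
      Q i * klFun (P i / Q i) = P i * log (P i) - P i * log (Q i) + (Q i - P i) := by
    intro i
    rcases eq_or_ne (Q i) 0 with hq | hq
    · simp [hq, hac i hq]
    rcases eq_or_ne (P i) 0 with hp | hp
    · simp [hp, klFun]
    rw [klFun, log_div hp hq]
    field_simp
    ring
  have hzero : ∑ i, Q i * klFun (P i / Q i) = 0 := by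
    simp only [hterm, sum_add_distrib, sum_sub_distrib, h, hPQ]
    ring
  funext i
  rcases eq_or_ne (Q i) 0 with hq | hq
  · rw [hq, hac i hq]
  have hPQ_nonneg : 0 ≤ P i / Q i := div_nonneg (hP i) (hQ i)
  have hi := (sum_eq_zero_iff_of_nonneg fun j _ =>
    mul_nonneg (hQ j) (klFun_nonneg (div_nonneg (hP j) (hQ j)))).1 hzero i (mem_univ i)
  rw [mul_eq_zero, or_iff_right hq, klFun_eq_zero_iff hPQ_nonneg, div_eq_one_iff_eq hq] at hi
  exact hi

lemma sum_powerset_neg_one_pow_card_real {ι : Type*} {T : Finset ι} (hT : T.Nonempty) :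
    ∑ K ∈ T.powerset, (-1 : ℝ) ^ K.card = 0 := by
  exact_mod_cast sum_powerset_neg_one_pow_card_of_nonempty hT

section AltSum

variable {ι : Type*} [DecidableEq ι]

def altPowersetSum (h : Finset ι → ℝ) (S : Finset ι) : ℝ :=
  ∑ J ∈ S.powerset, if J = ∅ then 0 else (-1 : ℝ) ^ (J.card + 1) * h J

lemma altPowersetSum_sum_eq_zero (g : ι → ℝ) {S : Finset ι} (hS : 2 ≤ S.card) :
    altPowersetSum (fun J => ∑ i ∈ J, g i) S = 0 := by
  have hswap : ∀ J ∈ S.powerset,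
      (if J = ∅ then 0 else (-1 : ℝ) ^ (J.card + 1) * ∑ i ∈ J, g i)
        = ∑ i ∈ S, if i ∈ J then (-1 : ℝ) ^ (J.card + 1) * g i else 0 := by
    intro J hJ
    rw [sum_ite_mem, inter_eq_right.2 (mem_powerset.1 hJ), ← mul_sum]
    split_ifs with hJ0 <;> simp [hJ0]
  rw [altPowersetSum, sum_congr rfl hswap, sum_comm]
  refine sum_eq_zero fun i hi => ?_
  have hi' : i ∉ S.erase i := notMem_erase i S
  rw [← insert_erase hi, sum_powerset_insert hi']
  have hwithout : ∀ J ∈ (S.erase i).powerset,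
      (if i ∈ J then (-1 : ℝ) ^ (J.card + 1) * g i else 0) = 0 := fun J hJ =>
    if_neg fun h => hi' (mem_powerset.1 hJ h)
  have hwith : ∀ J ∈ (S.erase i).powerset,
      (if i ∈ insert i J then (-1 : ℝ) ^ ((insert i J).card + 1) * g i else 0)
        = (-1 : ℝ) ^ J.card * g i := fun J hJ => by
    rw [if_pos (mem_insert_self i J), card_insert_of_notMem fun h => hi' (mem_powerset.1 hJ h)]
    ring
  have hne : (S.erase i).Nonempty := by
    rw [← card_pos, card_erase_of_mem hi]
    omega
  rw [sum_congr rfl hwithout, sum_congr rfl hwith, ← sum_mul,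
    sum_powerset_neg_one_pow_card_real hne]
  simp

lemma eq_of_altPowersetSum_eq {h₁ h₂ : Finset ι → ℝ}
    (hsmall : ∀ S : Finset ι, S.card ≤ 1 → h₁ S = h₂ S)
    (hsum : ∀ S : Finset ι, 2 ≤ S.card → altPowersetSum h₁ S = altPowersetSum h₂ S)
    (S : Finset ι) : h₁ S = h₂ S := by
  induction S using Finset.strongInduction with
  | H S ih =>
    rcases le_or_gt S.card 1 with hS | hS
    · exact hsmall S hS
    have hS0 : S ≠ ∅ := by rintro rfl; simp at hS
    have hdiff : altPowersetSum h₁ S - altPowersetSum h₂ S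
        = (-1 : ℝ) ^ (S.card + 1) * (h₁ S - h₂ S) := by
      rw [altPowersetSum, altPowersetSum, ← sum_sub_distrib,
        sum_eq_single_of_mem S (mem_powerset_self S)]
      · simp [hS0, mul_sub]
      · intro J hJ hJS
        rw [ih J (ssubset_of_subset_of_ne (mem_powerset.1 hJ) hJS), sub_self]
    rw [hsum S hS, sub_self, eq_comm, mul_eq_zero, sub_eq_zero] at hdiff
    exact hdiff.resolve_left (pow_ne_zero _ (by norm_num))

end AltSum

section Family

variable {Ω κ : Type*} [Fintype Ω] [Fintype κ] {β : κ → Type*} [∀ i, DecidableEq (β i)]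
  {p : Ω → ℝ}

def MutuallyIndep (p : Ω → ℝ) (Y : ∀ i, Ω → β i) : Prop :=
  ∀ f : ∀ i, β i, prob p (fun ω i => Y i ω) f = ∏ i, prob p (Y i) (f i)

lemma mutuallyIndep_of_subsingleton [Subsingleton κ] (hs : ∑ ω, p ω = 1) (Y : ∀ i, Ω → β i) :
    MutuallyIndep p Y := by
  intro f
  cases isEmpty_or_nonempty κ with
  | inl _ => simp [prob, Subsingleton.elim _ f, hs]
  | inr h =>
    obtain ⟨a⟩ := h
    rw [Fintype.prod_subsingleton _ a]
    refine prob_congr fun ω => ⟨fun h => congrFun h a, fun h => funext fun i => ?_⟩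
    obtain rfl := Subsingleton.elim i a
    exact h

lemma MutuallyIndep.restrict [DecidableEq κ] [∀ i, Fintype (β i)] (hs : ∑ ω, p ω = 1)
    {Y : ∀ i, Ω → β i} (h : MutuallyIndep p Y) (J : Finset κ) :
    MutuallyIndep p (fun i : J => Y i) := by
  intro g
  let c : ∀ i, β i → ℝ := fun i x => if hi : i ∈ J then (if x = g ⟨i, hi⟩ then 1 else 0) else 1
  have hc : ∀ f : ∀ i, β i, ∏ i, c i (f i) = if (fun i : J => f i) = g then 1 else 0 := by
    intro f
    simp only [c, Fintype.prod_dite, prod_const_one, mul_one, prod_boole]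
    simp [funext_iff]
  have hmarg : ∀ i, ∑ x, prob p (Y i) x * c i x
      = if hi : i ∈ J then prob p (Y i) (g ⟨i, hi⟩) else 1 := by
    intro i
    by_cases hi : i ∈ J
    · simp [c, hi]
    · simp [c, hi, sum_prob hs]
  calc prob p (fun ω (i : J) => Y i ω) g
      = ∑ f : ∀ i, β i, prob p (fun ω i => Y i ω) f * if (fun i : J => f i) = g then 1 else 0 :=
        prob_comp (fun ω i => Y i ω) (fun f (i : J) => f i) g
    _ = ∑ f : ∀ i, β i, ∏ i, prob p (Y i) (f i) * c i (f i) := by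
        refine sum_congr rfl fun f _ => ?_
        rw [h f, prod_mul_distrib, hc]
    _ = ∏ i, ∑ x, prob p (Y i) x * c i x :=
        (Fintype.prod_sum fun i x => prob p (Y i) x * c i x).symm
    _ = ∏ i, if hi : i ∈ J then prob p (Y i) (g ⟨i, hi⟩) else 1 :=
        prod_congr rfl fun i _ => hmarg i
    _ = ∏ i : J, prob p (Y i) (g i) :=
        (prod_attach_eq_prod_dite J fun i => prob p (Y i) (g i)).symm

lemma MutuallyIndep.of_restrict_univ [DecidableEq κ] {Y : ∀ i, Ω → β i}
    (h : MutuallyIndep p (fun i : (univ : Finset κ) => Y i)) : MutuallyIndep p Y := by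
  intro f
  rw [← prod_coe_sort univ, ← h fun i => f i]
  exact prob_congr fun ω =>
    ⟨fun h => funext fun i => congrFun h i, fun h => funext fun i => congrFun h ⟨i, mem_univ i⟩⟩

lemma sum_mul_log_prod_prob [DecidableEq κ] [∀ i, Fintype (β i)] (hp : ∀ ω, 0 ≤ p ω)
    (Y : ∀ i, Ω → β i) :
    ∑ f, prob p (fun ω i => Y i ω) f * log (∏ i, prob p (Y i) (f i))
      = ∑ i, ∑ x, prob p (Y i) x * log (prob p (Y i) x) := by
  have hlog : ∀ f, prob p (fun ω i => Y i ω) f * log (∏ i, prob p (Y i) (f i))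
      = prob p (fun ω i => Y i ω) f * ∑ i, log (prob p (Y i) (f i)) := by
    intro f
    rcases eq_or_ne (prob p (fun ω i => Y i ω) f) 0 with h0 | h0
    · simp [h0]
    rw [log_prod fun i _ => ?_]
    exact (h0.symm.lt_of_le (prob_nonneg hp _ f)).trans_le
      (prob_le_prob_comp hp _ (fun f => f i) f) |>.ne'
  simp only [hlog, mul_sum]
  rw [sum_comm]
  refine sum_congr rfl fun i _ => ?_
  rw [sum_prob_mul (fun ω i => Y i ω) (fun f => log (prob p (Y i) (f i))),
    sum_prob_mul (Y i) (fun x => log (prob p (Y i) x))]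

lemma ent_eq_sum_ent_iff [DecidableEq κ] [∀ i, Fintype (β i)] (hp : ∀ ω, 0 ≤ p ω)
    (hs : ∑ ω, p ω = 1) (Y : ∀ i, Ω → β i) :
    ent p (fun ω i => Y i ω) = ∑ i, ent p (Y i) ↔ MutuallyIndep p Y := by
  have hQ : ∀ f : ∀ i, β i, 0 ≤ ∏ i, prob p (Y i) (f i) :=
    fun f => prod_nonneg fun i _ => prob_nonneg hp _ _
  have hPQ : ∑ f, prob p (fun ω i => Y i ω) f = ∑ f : ∀ i, β i, ∏ i, prob p (Y i) (f i) := by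
    rw [sum_prob hs, ← Fintype.prod_sum, prod_eq_one fun i _ => sum_prob hs _]
  have hac : ∀ f, ∏ i, prob p (Y i) (f i) = 0 → prob p (fun ω i => Y i ω) f = 0 := by
    intro f hf
    obtain ⟨i, -, hi⟩ := prod_eq_zero_iff.1 hf
    exact le_antisymm (hi ▸ prob_le_prob_comp hp _ (fun f => f i) f) (prob_nonneg hp _ f)
  have hsum_ent : ∑ i, ent p (Y i)
      = -(∑ f, prob p (fun ω i => Y i ω) f * log (∏ i, prob p (Y i) (f i))) / log 2 := by
    rw [sum_mul_log_prod_prob hp Y, neg_div, sum_div, ← sum_neg_distrib]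
    simp only [ent_eq_neg_sum_mul_log, neg_div]
  have hlog2 : log 2 ≠ 0 := by positivity
  rw [ent_eq_neg_sum_mul_log, hsum_ent, div_left_inj' hlog2, neg_inj]
  refine ⟨fun h => congrFun (eq_of_sum_mul_log_eq (prob_nonneg hp _) hQ hPQ hac h.symm),
    fun h => ?_⟩
  rw [show prob p (fun ω i => Y i ω) = fun f => ∏ i, prob p (Y i) (f i) from funext h]

end Family

section Imulti

variable {Ω ι : Type*} [Fintype Ω] [Fintype ι] [DecidableEq ι]
  {α : ι → Type*} [∀ i, Fintype (α i)] [∀ i, DecidableEq (α i)] {p : Ω → ℝ}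

lemma Imulti_eq_altPowersetSum (X : ∀ i, Ω → α i) (S : Finset ι) :
    Imulti p X S = altPowersetSum (jointEnt p X) S := rfl

lemma jointEnt_eq_sum_iff (hp : ∀ ω, 0 ≤ p ω) (hs : ∑ ω, p ω = 1) (X : ∀ i, Ω → α i)
    (J : Finset ι) :
    jointEnt p X J = ∑ i ∈ J, ent p (X i) ↔ MutuallyIndep p (fun i : J => X i) := by
  rw [← sum_coe_sort J]
  exact ent_eq_sum_ent_iff hp hs (fun i : J => X i)

end Imulti

theorem stmt9_general {Ω : Type*} [Fintype Ω] {n : ℕ}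
    {α : Fin n → Type*} [∀ i, Fintype (α i)] [∀ i, DecidableEq (α i)]
    (p : Ω → ℝ) (hp : ∀ ω, 0 ≤ p ω) (hs : ∑ ω, p ω = 1)
    (X : ∀ i, Ω → α i) :
    (∀ f : ∀ i, α i, prob p (fun ω i => X i ω) f = ∏ i, prob p (X i) (f i)) ↔
      (∀ S : Finset (Fin n), 2 ≤ S.card → Imulti p X S = 0) := by
  change MutuallyIndep p X ↔ _
  constructor
  · intro hX S hS
    have hadd : jointEnt p X = fun J => ∑ i ∈ J, ent p (X i) :=
      funext fun J => (jointEnt_eq_sum_iff hp hs X J).2 (hX.restrict hs J)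
    rw [Imulti_eq_altPowersetSum, hadd]
    exact altPowersetSum_sum_eq_zero _ hS
  · intro hI
    have hsmall : ∀ J : Finset (Fin n), J.card ≤ 1 → jointEnt p X J = ∑ i ∈ J, ent p (X i) :=
      fun J hJ => (jointEnt_eq_sum_iff hp hs X J).2 <|
        have := card_le_one_iff_subsingleton_coe.1 hJ
        mutuallyIndep_of_subsingleton hs _
    have huniv := eq_of_altPowersetSum_eq hsmall (fun S hS => by
      rw [← Imulti_eq_altPowersetSum, hI S hS, altPowersetSum_sum_eq_zero _ hS]) univ
    exact ((jointEnt_eq_sum_iff hp hs X univ).1 huniv).of_restrict_univ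

theorem stmt9 {Ω : Type*} [Fintype Ω] {n : ℕ} (hn : 2 ≤ n)
    {α : Fin n → Type*} [∀ i, Fintype (α i)] [∀ i, DecidableEq (α i)]
    (p : Ω → ℝ) (hp : ∀ ω, 0 ≤ p ω) (hs : ∑ ω, p ω = 1)
    (X : ∀ i, Ω → α i) :
    (∀ f : ∀ i, α i, prob p (fun ω i => X i ω) f = ∏ i, prob p (X i) (f i)) ↔
      (∀ S : Finset (Fin n), 2 ≤ S.card → Imulti p X S = 0) :=
  stmt9_general p hp hs X
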